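/- arXiv:2204.14165 — 4 statements merged into one kernel-verified Lean document; each statement's English description precedes it below -/
import Mathlib

section
/- Fix a > 0 and x₂ > 0. For every x₁ > 0, the function t ↦ V_a(t, x₂) has derivative −Φ(a/2 − (1/a)·log(x₁/x₂)) / x₁² at t = x₁. -/
open Real MeasureTheory Filter Topology

/-- The standard normal density φ(t) = (2π)^{-1/2} e^{-t²/2}. -/
noncomputable def stdNormalPDF (t : ℝ) : ℝ :=
  (Real.sqrt (2 * Real.pi))⁻¹ * Real.exp (-t ^ 2 / 2)

/-- The standard normal cumulative distribution function Φ. -/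
noncomputable def stdNormalCDF (t : ℝ) : ℝ :=
  ∫ u in Set.Iic t, stdNormalPDF u

/-- The bivariate Brown–Resnick exponent measure V_a(x₁, x₂). -/
noncomputable def brV (a x₁ x₂ : ℝ) : ℝ :=
  (1 / x₁) * stdNormalCDF (a / 2 - (1 / a) * Real.log (x₁ / x₂)) +
    (1 / x₂) * stdNormalCDF (a / 2 - (1 / a) * Real.log (x₂ / x₁))

/-!
Differentiating `V_a(t, x₂)` in `t` produces, besides `-Φ(G)/x₁²`, the two terms
`-φ(G)/(a x₁²)` and `φ(H)/(a x₁ x₂)` from the chain rule, where `G, H = a/2 ∓ (1/a) log(x₁/x₂)`.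
Since `G² - H² = -2 log(x₁/x₂)`, we have `x₂ φ(G) = x₁ φ(H)`, so these two terms cancel.
-/

theorem hasDerivAt_integral_Iic {E : Type*} [NormedAddCommGroup E] [NormedSpace ℝ E]
    [CompleteSpace E] {f : ℝ → E} (hf : Integrable f) (hcont : Continuous f) (x : ℝ) :
    HasDerivAt (fun t => ∫ u in Set.Iic t, f u) (f x) x := by
  have hsplit : ∀ t, ∫ u in Set.Iic t, f u = (∫ u in Set.Iic 0, f u) + ∫ u in (0 : ℝ)..t, f u :=
    fun t => by
      rw [← intervalIntegral.integral_Iic_sub_Iic hf.integrableOn hf.integrableOn,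
        add_sub_cancel]
  rw [funext hsplit]
  exact (intervalIntegral.integral_hasDerivAt_right hf.intervalIntegrable
    hf.1.stronglyMeasurableAtFilter hcont.continuousAt).const_add _

theorem stdNormalPDF_eq_gaussianPDFReal : stdNormalPDF = ProbabilityTheory.gaussianPDFReal 0 1 := by
  funext t
  simp [stdNormalPDF, ProbabilityTheory.gaussianPDFReal]

theorem hasDerivAt_stdNormalCDF (x : ℝ) : HasDerivAt stdNormalCDF (stdNormalPDF x) x :=
  hasDerivAt_integral_Iic (stdNormalPDF_eq_gaussianPDFReal ▸
    ProbabilityTheory.integrable_gaussianPDFReal 0 1) (by unfold stdNormalPDF; fun_prop) x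

theorem stdNormalPDF_half_sub {a : ℝ} (ha : a ≠ 0) (w : ℝ) :
    stdNormalPDF (a / 2 - (1 / a) * w) = exp w * stdNormalPDF (a / 2 + (1 / a) * w) := by
  have hexp : -(a / 2 - (1 / a) * w) ^ 2 / 2 = w + -(a / 2 + (1 / a) * w) ^ 2 / 2 := by
    field_simp
    ring
  rw [stdNormalPDF, stdNormalPDF, hexp, exp_add]
  ring

theorem mul_stdNormalPDF_half_sub_log_div {a : ℝ} (ha : a ≠ 0) {x y : ℝ} (hx : 0 < x)
    (hy : 0 < y) :
    y * stdNormalPDF (a / 2 - (1 / a) * Real.log (x / y)) =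
      x * stdNormalPDF (a / 2 - (1 / a) * Real.log (y / x)) := by
  rw [← inv_div x y, log_inv, mul_neg, sub_neg_eq_add, stdNormalPDF_half_sub ha,
    exp_log (div_pos hx hy)]
  field_simp

theorem HasDerivAt.stdNormalCDF_half_sub_log {f : ℝ → ℝ} {f' x : ℝ} (hf : HasDerivAt f f' x)
    (hfx : f x ≠ 0) (a : ℝ) :
    HasDerivAt (fun t => stdNormalCDF (a / 2 - (1 / a) * Real.log (f t)))
      (stdNormalPDF (a / 2 - (1 / a) * Real.log (f x)) * -((1 / a) * (f' / f x))) x :=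
  (hasDerivAt_stdNormalCDF _).comp x (((hf.log hfx).const_mul (1 / a)).const_sub (a / 2))

theorem stmt1 (a x₂ : ℝ) (ha : 0 < a) (hx₂ : 0 < x₂) :
    ∀ x₁ : ℝ, 0 < x₁ →
      HasDerivAt (fun t => brV a t x₂)
        (-(stdNormalCDF (a / 2 - (1 / a) * Real.log (x₁ / x₂)) / x₁ ^ 2)) x₁ := by
  intro x₁ hx₁
  have hinv : HasDerivAt (fun t : ℝ => 1 / t) (-(x₁ ^ 2)⁻¹) x₁ := by
    simpa only [one_div] using hasDerivAt_inv hx₁.ne'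
  have hdiv : HasDerivAt (fun t : ℝ => x₂ / t) (x₂ * -(x₁ ^ 2)⁻¹) x₁ := by
    simpa only [mul_one_div] using hinv.const_mul x₂
  have hG := HasDerivAt.stdNormalCDF_half_sub_log ((hasDerivAt_id' x₁).div_const x₂)
    (div_ne_zero hx₁.ne' hx₂.ne') a
  have hH := HasDerivAt.stdNormalCDF_half_sub_log hdiv (div_ne_zero hx₂.ne' hx₁.ne') a
  refine ((hinv.mul hG).add (hH.const_mul (1 / x₂))).congr_deriv ?_
  have hPDF := mul_stdNormalPDF_half_sub_log_div ha.ne' hx₁ hx₂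
  generalize stdNormalPDF (a / 2 - 1 / a * log (x₁ / x₂)) = φG at hPDF ⊢
  generalize stdNormalPDF (a / 2 - 1 / a * log (x₂ / x₁)) = φH at hPDF ⊢
  field_simp
  linear_combination -hPDF
end

section
/- For all x₁, x₂ > 0, V_a(x₁, x₂) tends to max(1/x₁, 1/x₂) as a → 0⁺; that is, in the limit of vanishing semivariogram the Brown–Resnick model attains complete dependence. -/
open Real MeasureTheory Filter Topology

lemma stdNormalPDF_eq :
    stdNormalPDF = fun t => (Real.sqrt (2 * Real.pi))⁻¹ * Real.exp (-(2⁻¹ : ℝ) * t ^ 2) := by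
  funext t
  rw [stdNormalPDF, show -t ^ 2 / 2 = -(2⁻¹ : ℝ) * t ^ 2 by ring]

lemma integrable_stdNormalPDF : Integrable stdNormalPDF := by
  rw [stdNormalPDF_eq]
  exact (integrable_exp_neg_mul_sq (by norm_num)).const_mul _

lemma integral_stdNormalPDF : ∫ t, stdNormalPDF t = 1 := by
  rw [stdNormalPDF_eq]
  rw [MeasureTheory.integral_const_mul, integral_gaussian]
  rw [show Real.pi / 2⁻¹ = 2 * Real.pi by ring]
  exact inv_mul_cancel₀ (Real.sqrt_ne_zero'.2 (by positivity))

lemma stdNormalCDF_atTop : Tendsto stdNormalCDF atTop (𝓝 1) := by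
  have h := MeasureTheory.tendsto_setIntegral_of_monotone
    (s := fun t : ℝ => Set.Iic t) (f := stdNormalPDF) (μ := volume)
    (fun t => measurableSet_Iic) (fun a b hab => Set.Iic_subset_Iic.2 hab)
    (integrable_stdNormalPDF.integrableOn)
  simp only [Set.iUnion_Iic, Set.top_eq_univ, MeasureTheory.setIntegral_univ,
    integral_stdNormalPDF] at h
  exact h

lemma stdNormalCDF_atBot : Tendsto stdNormalCDF atBot (𝓝 0) := by
  have h := MeasureTheory.tendsto_setIntegral_of_antitone
    (s := fun t : ℝ => Set.Iic (-t)) (f := stdNormalPDF) (μ := volume)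
    (fun t => measurableSet_Iic)
    (fun a b hab => Set.Iic_subset_Iic.2 (neg_le_neg hab))
    ⟨0, integrable_stdNormalPDF.integrableOn⟩
  have hI : (⋂ t : ℝ, Set.Iic (-t)) = (∅ : Set ℝ) := by
    ext x
    simp only [Set.mem_iInter, Set.mem_Iic, Set.mem_empty_iff_false, iff_false, not_forall]
    exact ⟨-x + 1, by linarith⟩
  rw [hI, MeasureTheory.setIntegral_empty] at h
  have h2 := h.comp (tendsto_neg_atBot_atTop : Tendsto (fun t : ℝ => -t) atBot atTop)
  have heq : ((fun i : ℝ => ∫ x in Set.Iic (-i), stdNormalPDF x) ∘ Neg.neg) = stdNormalCDF := by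
    funext t; simp [Function.comp, stdNormalCDF]
  rwa [heq] at h2

lemma stdNormalCDF_continuous : Continuous stdNormalCDF := by
  have heq : stdNormalCDF = fun t => stdNormalCDF 0 + ∫ x in (0:ℝ)..t, stdNormalPDF x := by
    funext t
    have := intervalIntegral.integral_Iic_sub_Iic (f := stdNormalPDF) (μ := volume)
      (a := 0) (b := t) integrable_stdNormalPDF.integrableOn
      integrable_stdNormalPDF.integrableOn
    simp only [stdNormalCDF]
    linarith [this]
  rw [heq]
  exact continuous_const.add (integrable_stdNormalPDF.continuous_primitive 0)

lemma stdNormalCDF_zero : stdNormalCDF 0 = 1 / 2 := by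
  have hsymm : stdNormalCDF 0 = ∫ x in Set.Ioi (0:ℝ), stdNormalPDF x := by
    rw [stdNormalCDF, ← neg_zero, ← integral_comp_neg_Iic, neg_zero]
    congr 1
    funext x
    rw [stdNormalPDF, stdNormalPDF, neg_sq]
  have hsum := intervalIntegral.integral_Iic_add_Ioi (b := (0:ℝ)) (μ := volume)
    (f := stdNormalPDF) integrable_stdNormalPDF.integrableOn
    integrable_stdNormalPDF.integrableOn
  rw [integral_stdNormalPDF, ← hsymm] at hsum
  rw [show stdNormalCDF 0 = ∫ u in Set.Iic (0:ℝ), stdNormalPDF u from rfl] at hsum ⊢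
  linarith

lemma tendsto_half_sub_atTop {L : ℝ} (hL : L < 0) :
    Tendsto (fun a : ℝ => a / 2 - (1 / a) * L) (nhdsWithin 0 (Set.Ioi 0)) atTop := by
  have h1 : Tendsto (fun a : ℝ => a / 2) (nhdsWithin 0 (Set.Ioi 0)) (𝓝 0) := by
    have := ((continuous_id.div_const 2).tendsto (0 : ℝ)).mono_left
      (nhdsWithin_le_nhds (s := Set.Ioi (0:ℝ)))
    simpa using this
  have h2 : Tendsto (fun a : ℝ => (-L) * a⁻¹) (nhdsWithin 0 (Set.Ioi 0)) atTop :=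
    Tendsto.const_mul_atTop (by linarith) tendsto_inv_nhdsGT_zero
  have h := h1.add_atTop h2
  refine h.congr fun a => ?_
  ring

lemma tendsto_half_sub_atBot {L : ℝ} (hL : 0 < L) :
    Tendsto (fun a : ℝ => a / 2 - (1 / a) * L) (nhdsWithin 0 (Set.Ioi 0)) atBot := by
  have h1 : Tendsto (fun a : ℝ => a / 2) (nhdsWithin 0 (Set.Ioi 0)) (𝓝 0) := by
    have := ((continuous_id.div_const 2).tendsto (0 : ℝ)).mono_left
      (nhdsWithin_le_nhds (s := Set.Ioi (0:ℝ)))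
    simpa using this
  have h2 : Tendsto (fun a : ℝ => (-L) * a⁻¹) (nhdsWithin 0 (Set.Ioi 0)) atBot :=
    Tendsto.const_mul_atTop_of_neg (by linarith) tendsto_inv_nhdsGT_zero
  have h := h1.add_atBot h2
  refine h.congr fun a => ?_
  ring

theorem stmt7 (x₁ x₂ : ℝ) (hx₁ : 0 < x₁) (hx₂ : 0 < x₂) :
    Tendsto (fun a => brV a x₁ x₂) (nhdsWithin 0 (Set.Ioi 0))
      (nhds (max (1 / x₁) (1 / x₂))) := by
  rcases lt_trichotomy x₁ x₂ with h | h | h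
  · -- x₁ < x₂ : limit is 1/x₁
    have hL1 : Real.log (x₁ / x₂) < 0 :=
      Real.log_neg (by positivity) ((div_lt_one hx₂).2 h)
    have hL2 : 0 < Real.log (x₂ / x₁) :=
      Real.log_pos ((one_lt_div hx₁).2 h)
    have ht1 := stdNormalCDF_atTop.comp (tendsto_half_sub_atTop hL1)
    have ht2 := stdNormalCDF_atBot.comp (tendsto_half_sub_atBot hL2)
    have hmax : max (1 / x₁) (1 / x₂) = 1 / x₁ :=
      max_eq_left (by apply one_div_le_one_div_of_le hx₁ h.le)
    rw [hmax]
    have := ((tendsto_const_nhds (x := 1 / x₁)).mul ht1).add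
      ((tendsto_const_nhds (x := 1 / x₂)).mul ht2)
    simpa [brV, Function.comp] using this
  · subst h
    have hmax : max (1 / x₁) (1 / x₁) = 1 / x₁ := max_self _
    rw [hmax]
    have harg : Tendsto (fun a : ℝ => a / 2 - (1 / a) * Real.log (x₁ / x₁))
        (nhdsWithin 0 (Set.Ioi 0)) (𝓝 0) := by
      have : (fun a : ℝ => a / 2 - (1 / a) * Real.log (x₁ / x₁)) = fun a : ℝ => a / 2 := by
        funext a; rw [div_self hx₁.ne', Real.log_one]; ring
      rw [this]
      have := ((continuous_id.div_const 2).tendsto (0 : ℝ)).mono_left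
        (nhdsWithin_le_nhds (s := Set.Ioi (0:ℝ)))
      simpa using this
    have hΦ := (stdNormalCDF_continuous.tendsto 0).comp harg
    rw [stdNormalCDF_zero] at hΦ
    have := ((tendsto_const_nhds (x := 1 / x₁)).mul hΦ).add
      ((tendsto_const_nhds (x := 1 / x₁)).mul hΦ)
    have hval : 1 / x₁ * (1 / 2) + 1 / x₁ * (1 / 2) = 1 / x₁ := by ring
    rw [hval] at this
    simpa [brV, Function.comp] using this
  · -- x₂ < x₁ : limit is 1/x₂
    have hL1 : 0 < Real.log (x₁ / x₂) :=
      Real.log_pos ((one_lt_div hx₂).2 h)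
    have hL2 : Real.log (x₂ / x₁) < 0 :=
      Real.log_neg (by positivity) ((div_lt_one hx₁).2 h)
    have ht1 := stdNormalCDF_atBot.comp (tendsto_half_sub_atBot hL1)
    have ht2 := stdNormalCDF_atTop.comp (tendsto_half_sub_atTop hL2)
    have hmax : max (1 / x₁) (1 / x₂) = 1 / x₂ :=
      max_eq_right (by apply one_div_le_one_div_of_le hx₂ h.le)
    rw [hmax]
    have := ((tendsto_const_nhds (x := 1 / x₁)).mul ht1).add
      ((tendsto_const_nhds (x := 1 / x₂)).mul ht2)
    simpa [brV, Function.comp] using this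
end

section
/- Let μ be the unit Fréchet probability measure on ℝ (the Borel probability measure with μ((−∞, x]) = exp(−1/x) for x > 0 and 0 otherwise), and let m ≥ 1 be an integer. Then the pushforward of the m-fold product measure μ^{⊗m} on ℝ^m under the map y ↦ (max_{1 ≤ i ≤ m} y_i)/m equals μ; i.e., the unit Fréchet distribution is max-stable. -/
open MeasureTheory Set

/-!
The maximum of independent variables is at most `t` iff each of them is, so the distribution
function of `max_i Y_i / m` at `x` is `F(m x)^m`; for `F(x) = exp(-1/x)` this is
`exp(-m/(m x)) = F(x)`, and both sides vanish for `x ≤ 0`.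
-/

lemma preimage_iSup_div_Iic {ι : Type*} [Finite ι] [Nonempty ι] {c : ℝ} (hc : 0 < c) (x : ℝ) :
    (fun y : ι → ℝ => (⨆ i, y i) / c) ⁻¹' Iic x = univ.pi fun _ => Iic (c * x) := by
  ext y
  simp only [mem_preimage, mem_Iic, mem_univ_pi, div_le_iff₀ hc,
    ciSup_le_iff (finite_range y).bddAbove, mul_comm c]

lemma measurable_iSup_div {ι : Type*} [Countable ι] (c : ℝ) :
    Measurable fun y : ι → ℝ => (⨆ i, y i) / c :=
  (Measurable.iSup fun i => measurable_pi_apply i).div_const c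

lemma map_iSup_div_pi_Iic {ι : Type*} [Fintype ι] [Nonempty ι] (μ : ι → Measure ℝ)
    [∀ i, SigmaFinite (μ i)] {c : ℝ} (hc : 0 < c) (x : ℝ) :
    (Measure.pi μ).map (fun y : ι → ℝ => (⨆ i, y i) / c) (Iic x) = ∏ i, μ i (Iic (c * x)) := by
  rw [Measure.map_apply (measurable_iSup_div c) measurableSet_Iic, preimage_iSup_div_Iic hc,
    Measure.pi_pi]

lemma exp_neg_one_div_mul_pow {n : ℕ} (hn : n ≠ 0) (x : ℝ) :
    Real.exp (-1 / (n * x)) ^ n = Real.exp (-1 / x) := by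
  rw [← Real.exp_nat_mul]
  congr 1
  field_simp

theorem stmt17 (μ : Measure ℝ) [IsProbabilityMeasure μ]
    (hcdf : ∀ x : ℝ, 0 < x → μ (Set.Iic x) = ENNReal.ofReal (Real.exp (-1 / x)))
    (hzero : ∀ x : ℝ, x ≤ 0 → μ (Set.Iic x) = 0)
    (m : ℕ) (hm : 1 ≤ m) :
    Measure.map (fun y : Fin m → ℝ => (⨆ i, y i) / (m : ℝ))
      (Measure.pi fun _ : Fin m => μ) = μ := by
  have hm₀ : m ≠ 0 := by omega
  have hm_pos : (0 : ℝ) < m := by positivity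
  have : Nonempty (Fin m) := ⟨⟨0, by omega⟩⟩
  have := Measure.isProbabilityMeasure_map (μ := Measure.pi fun _ : Fin m => μ)
    (measurable_iSup_div (m : ℝ)).aemeasurable
  refine Measure.ext_of_Iic _ _ fun x => ?_
  rw [map_iSup_div_pi_Iic _ hm_pos, Finset.prod_const, Finset.card_univ, Fintype.card_fin]
  rcases le_or_gt x 0 with hx | hx
  · rw [hzero x hx, hzero _ (mul_nonpos_of_nonneg_of_nonpos hm_pos.le hx), zero_pow hm₀]
  · rw [hcdf x hx, hcdf _ (by positivity), ← ENNReal.ofReal_pow (Real.exp_nonneg _),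
      exp_neg_one_div_mul_pow hm₀]
end

section
/- Let p ≤ q be positive integers, let c be a symmetric positive definite real q×q matrix, let M be a real q×p matrix, and let W be a symmetric positive semidefinite real q×q matrix such that MᵀWM is invertible. Then Mᵀc^{−1}M is invertible and the matrix (MᵀWM)^{−1} Mᵀ W c W M (MᵀWM)^{−1} − (Mᵀ c^{−1} M)^{−1} is positive semidefinite. In particular, taking M to be the stacked sensitivity matrix i(θ₀), c the variability matrix c(θ₀), and W the block-diagonal weight W = diag{(c^{−1})_{k,k}}, the asymptotic covariance h^{−1} g h^{−ᵀ} of the proposed block-diagonal GMM estimator dominates, in the Loewner order, the covariance (iᵀ c^{−1} i)^{−1} of the optimally weighted GMM estimator (Hansen's optimal weighting). -/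
/-! The GMM estimator's covariance is `Ω c Ωᴴ` with `Ω = (MᴴWM)⁻¹MᴴW`, a left inverse of `M`.
This is Gauss–Markov: for every left inverse `G` of `M`, put `G₀ = (Mᴴc⁻¹M)⁻¹Mᴴc⁻¹`. Then
`c G₀ᴴ = M (Mᴴc⁻¹M)⁻¹`, so every cross term `G c G₀ᴴ` equals `(Mᴴc⁻¹M)⁻¹`, and
`G c Gᴴ - (Mᴴc⁻¹M)⁻¹ = (G - G₀) c (G - G₀)ᴴ ⪰ 0`. Since `MᴴWM` is invertible, `M` is injective,
which makes `Mᴴc⁻¹M` positive definite and hence invertible. -/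

open Matrix

open scoped ComplexOrder

namespace Matrix

variable {𝕜 m n : Type*} [RCLike 𝕜] [Fintype m] [Fintype n] [DecidableEq n]

theorem mulVec_injective_of_isUnit_mul {N : Matrix n m 𝕜} {M : Matrix m n 𝕜}
    (h : IsUnit (N * M)) : Function.Injective M.mulVec := by
  refine Function.Injective.of_comp (f := N.mulVec) ?_
  simpa only [Function.comp_def, mulVec_mulVec] using mulVec_injective_of_isUnit h

variable [DecidableEq m]

theorem PosDef.posSemidef_mul_mul_conjTranspose_sub_inv {c : Matrix m m 𝕜} (hc : c.PosDef)
    {M : Matrix m n 𝕜} (hB : IsUnit (Mᴴ * c⁻¹ * M)) {G : Matrix n m 𝕜} (hG : G * M = 1) :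
    (G * c * Gᴴ - (Mᴴ * c⁻¹ * M)⁻¹).PosSemidef := by
  set B := Mᴴ * c⁻¹ * M
  set G₀ := B⁻¹ * Mᴴ * c⁻¹
  have hBinv : B⁻¹ᴴ = B⁻¹ := (isHermitian_conjTranspose_mul_mul M hc.isHermitian.inv).inv
  have hcG₀ : c * G₀ᴴ = M * B⁻¹ := by
    rw [conjTranspose_mul, conjTranspose_mul, conjTranspose_conjTranspose, hBinv,
      hc.isHermitian.inv, mul_nonsing_inv_cancel_left _ _ ((isUnit_iff_isUnit_det c).mp hc.isUnit)]
  have hG₀M : G₀ * M = 1 := by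
    rw [Matrix.mul_assoc, Matrix.mul_assoc, ← Matrix.mul_assoc Mᴴ,
      nonsing_inv_mul _ ((isUnit_iff_isUnit_det B).mp hB)]
  have cross (H : Matrix n m 𝕜) (hH : H * M = 1) : H * c * G₀ᴴ = B⁻¹ := by
    rw [Matrix.mul_assoc, hcG₀, ← Matrix.mul_assoc, hH, Matrix.one_mul]
  have hGG₀ : G₀ * c * Gᴴ = B⁻¹ := by
    rw [← hBinv, ← cross G hG]
    simp only [conjTranspose_mul, conjTranspose_conjTranspose, hc.isHermitian.eq, Matrix.mul_assoc]
  have hsquare : G * c * Gᴴ - B⁻¹ = (G - G₀) * c * (G - G₀)ᴴ := by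
    simp only [conjTranspose_sub, Matrix.sub_mul, Matrix.mul_sub, cross G hG, cross G₀ hG₀M, hGG₀]
    abel
  rw [hsquare]
  exact hc.posSemidef.mul_mul_conjTranspose_same _

theorem PosDef.posSemidef_gmm_sub_optimal {c : Matrix m m 𝕜} (hc : c.PosDef) {M : Matrix m n 𝕜}
    {W : Matrix m m 𝕜} (hW : W.IsHermitian) (hA : IsUnit (Mᴴ * W * M)) :
    IsUnit (Mᴴ * c⁻¹ * M) ∧
      ((Mᴴ * W * M)⁻¹ * (Mᴴ * W * c * W * M) * (Mᴴ * W * M)⁻¹ - (Mᴴ * c⁻¹ * M)⁻¹).PosSemidef := by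
  have hB : IsUnit (Mᴴ * c⁻¹ * M) :=
    (hc.inv.conjTranspose_mul_mul_same (mulVec_injective_of_isUnit_mul hA)).isUnit
  refine ⟨hB, ?_⟩
  have hΩM : (Mᴴ * W * M)⁻¹ * (Mᴴ * W) * M = 1 := by
    rw [Matrix.mul_assoc, nonsing_inv_mul _ ((isUnit_iff_isUnit_det _).mp hA)]
  have hΩ : (Mᴴ * W * M)⁻¹ * (Mᴴ * W) * c * ((Mᴴ * W * M)⁻¹ * (Mᴴ * W))ᴴ =
      (Mᴴ * W * M)⁻¹ * (Mᴴ * W * c * W * M) * (Mᴴ * W * M)⁻¹ := by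
    rw [conjTranspose_mul, conjTranspose_mul, conjTranspose_conjTranspose, hW.eq,
      (isHermitian_conjTranspose_mul_mul M hW).inv.eq]
    simp only [Matrix.mul_assoc]
  rw [← hΩ]
  exact hc.posSemidef_mul_mul_conjTranspose_sub_inv hB hΩM

end Matrix

theorem stmt19_general (p q : ℕ)
    (c : Matrix (Fin q) (Fin q) ℝ) (hc : c.PosDef)
    (M : Matrix (Fin q) (Fin p) ℝ)
    (W : Matrix (Fin q) (Fin q) ℝ) (hW : W.PosSemidef)
    (hinv : IsUnit (Mᵀ * W * M)) :
    IsUnit (Mᵀ * c⁻¹ * M) ∧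
      ((Mᵀ * W * M)⁻¹ * (Mᵀ * W * c * W * M) * (Mᵀ * W * M)⁻¹ -
        (Mᵀ * c⁻¹ * M)⁻¹).PosSemidef := by
  rw [← conjTranspose_eq_transpose_of_trivial] at hinv ⊢
  exact hc.posSemidef_gmm_sub_optimal hW.isHermitian hinv

theorem stmt19 (p q : ℕ) (hp : 0 < p) (hpq : p ≤ q)
    (c : Matrix (Fin q) (Fin q) ℝ) (hc : c.PosDef)
    (M : Matrix (Fin q) (Fin p) ℝ)
    (W : Matrix (Fin q) (Fin q) ℝ) (hW : W.PosSemidef)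
    (hinv : IsUnit (Mᵀ * W * M)) :
    IsUnit (Mᵀ * c⁻¹ * M) ∧
      ((Mᵀ * W * M)⁻¹ * (Mᵀ * W * c * W * M) * (Mᵀ * W * M)⁻¹ -
        (Mᵀ * c⁻¹ * M)⁻¹).PosSemidef :=
  stmt19_general p q c hc M W hW hinv
end
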